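/- Let b ∈ ℂ and r,t ∈ {0,1} with r ≠ t. Suppose g ∈ ℂ[∂,λ] satisfies g(∂+λ,0)·(∂+tλ+b) − g(∂,0)·(∂+rλ+b) = (1/2)λ·g(∂,λ) for all ∂,λ. Then g = 0. -/

import Mathlib

/-!
Write `φ(∂) = g(∂, 0)`. Comparing the coefficients of `λ` in the identity gives
`(∂ + b) φ' = (1/2 + r - t) φ`; comparing top coefficients there shows `deg φ = 1/2 + r - t`,
which is `-1/2` or `3/2`, so `φ = 0`. The identity then reads `λ g(∂, λ) = 0`, hence `g = 0`.
-/

open Polynomial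

/-- Evaluation of a two-variable polynomial `f ∈ ℂ[∂][λ]` at `∂ = x`, `λ = l`. -/
noncomputable def ev (f : Polynomial (Polynomial ℂ)) (x l : ℂ) : ℂ :=
  (f.map (Polynomial.evalRingHom l)).eval x

lemma ev_eq_eval_eval_C (g : ℂ[X][X]) (x l : ℂ) : ev g x l = (g.eval (C x)).eval l :=
  map_evalRingHom_eval l x g

lemma coeff_derivative_mul_X {R : Type*} [CommSemiring R] (p : R[X]) (n : ℕ) :
    (derivative p * X).coeff n = n * p.coeff n := by
  cases n with
  | zero => simp
  | succ n => rw [coeff_mul_X, coeff_derivative]; push_cast; ring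

section

variable {R : Type*} [CommRing R] [IsDomain R]

theorem eq_zero_of_derivative_mul_X_add_C_eq_C_mul {φ : R[X]} {b c : R}
    (hc : ∀ n : ℕ, (n : R) ≠ c) (h : derivative φ * (X + C b) = C c * φ) : φ = 0 := by
  by_contra hφ
  set n := φ.natDegree
  have hcoeff := congrArg (coeff · n) h
  have htop : φ.coeff (n + 1) = 0 := coeff_natDegree_succ_eq_zero
  simp only [mul_add, coeff_add, coeff_derivative_mul_X, coeff_mul_C, coeff_C_mul,
    coeff_derivative, htop, zero_mul, add_zero] at hcoeff
  have hlead : φ.coeff n ≠ 0 := leadingCoeff_ne_zero.mpr hφ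
  exact hc n (mul_right_cancel₀ hlead hcoeff)

variable [Infinite R]

/-- Compare the coefficients of `l` after Taylor-expanding `φ` at `x`. -/
theorem derivative_eval_mul_add_eq_of_forall {φ ψ : R[X]} {x b r t k : R}
    (h : ∀ l, φ.eval (x + l) * (x + t * l + b) - φ.eval x * (x + r * l + b) = k * l * ψ.eval l) :
    φ.derivative.eval x * (x + b) + (t - r) * φ.eval x = k * ψ.eval 0 := by
  have hpoly : taylor x φ * (C (x + b) + C t * X) - C (φ.eval x) * (C (x + b) + C r * X) =
      C k * (ψ * X) := by
    refine funext fun l => ?_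
    simp only [eval_sub, eval_mul, eval_add, eval_C, eval_X, taylor_eval]
    rw [add_comm l x]
    linear_combination h l
  have hcoeff := congrArg (coeff · 1) hpoly
  simp only [mul_add, ← mul_assoc, coeff_sub, coeff_add, coeff_mul_X, coeff_mul_C, coeff_C_mul,
    taylor_coeff_one, taylor_coeff_zero, coeff_C_succ, coeff_C_zero] at hcoeff
  rw [← coeff_zero_eq_eval_zero]
  linear_combination hcoeff

theorem eq_zero_of_forall_mul_eval_eq_zero {ψ : R[X]} {k : R} (hk : k ≠ 0)
    (h : ∀ l, k * l * ψ.eval l = 0) : ψ = 0 := by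
  have : C k * X * ψ = 0 := funext fun l => by simpa using h l
  simpa [hk, X_ne_zero] using this

theorem eq_zero_of_forall_eval_C_eq_zero {g : R[X][X]} (h : ∀ x, g.eval (C x) = 0) : g = 0 :=
  eq_zero_of_infinite_isRoot g <|
    (Set.infinite_range_of_injective C_injective).mono <| by rintro _ ⟨x, rfl⟩; exact h x

end

lemma natCast_ne_half_add_sub {r t : ℂ} (hr : r = 0 ∨ r = 1) (ht : t = 0 ∨ t = 1) (hrt : r ≠ t)
    (n : ℕ) : (n : ℂ) ≠ 1 / 2 + r - t := by
  have hc : 1 / 2 + r - t = -1 / 2 ∨ 1 / 2 + r - t = 3 / 2 := by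
    rcases hr with rfl | rfl <;> rcases ht with rfl | rfl <;> first | exact absurd rfl hrt | norm_num
  rcases hc with hc | hc <;> rw [hc] <;> intro hn
  · have : (n : ℚ) = -1 / 2 := by exact_mod_cast hn
    linarith [n.cast_nonneg (α := ℚ)]
  · have h2n : ((2 * n : ℕ) : ℂ) = (3 : ℕ) := by push_cast; linear_combination 2 * hn
    have : 2 * n = 3 := by exact_mod_cast h2n
    omega

theorem stmt4 (b r t : ℂ) (hr : r = 0 ∨ r = 1) (ht : t = 0 ∨ t = 1) (hrt : r ≠ t)
    (g : Polynomial (Polynomial ℂ))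
    (h : ∀ x l : ℂ,
      ev g (x + l) 0 * (x + t*l + b) - ev g x 0 * (x + r*l + b) = (1/2) * l * ev g x l) :
    g = 0 := by
  set φ : ℂ[X] := g.map (evalRingHom 0)
  have hev0 : ∀ y, ev g y 0 = φ.eval y := fun _ => rfl
  have hg : ∀ x l, φ.eval (x + l) * (x + t * l + b) - φ.eval x * (x + r * l + b) =
      1 / 2 * l * (g.eval (C x)).eval l := fun x l => by
    rw [← hev0, ← hev0, ← ev_eq_eval_eval_C]; exact h x l
  have hODE : derivative φ * (X + C b) = C (1 / 2 + r - t) * φ := by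
    refine funext fun x => ?_
    have hx := derivative_eval_mul_add_eq_of_forall (hg x)
    rw [← ev_eq_eval_eval_C, hev0] at hx
    simp only [eval_mul, eval_add, eval_X, eval_C]
    linear_combination hx
  have hφ0 : φ = 0 :=
    eq_zero_of_derivative_mul_X_add_C_eq_C_mul (natCast_ne_half_add_sub hr ht hrt) hODE
  refine eq_zero_of_forall_eval_C_eq_zero fun x => ?_
  refine eq_zero_of_forall_mul_eval_eq_zero (k := 1 / 2) (by norm_num) fun l => ?_
  simpa only [hφ0, eval_zero, zero_mul, sub_self, eq_comm] using hg x l
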